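/- Let g be a finite-dimensional real Lie algebra, n ⊆ g a nonzero nilpotent ideal with dim(g/n) = 1, and z the center of n (a nonzero ideal of g). If O ⊆ g* is a nonempty open subset such that O is contained in the closure of the coadjoint orbit Int(g)·ξ for every ξ ∈ O, then O ∩ z^⊥ = ∅; that is, every ξ ∈ O satisfies ξ|_z ≠ 0, where z^⊥ is the annihilator of z in g*. -/

import Mathlib

/-!
Since `z` is an ideal of `g`, every element of `Int(g)` preserves `z`, so the coadjoint
orbit of a point of `z^⊥` stays in `z^⊥`. If some `ξ ∈ O` lay in `z^⊥`, then `O` would lie in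
the closure of its orbit, hence in the closed subspace `z^⊥`; a subspace with nonempty
interior is the whole space, so `z^⊥ = g*` and `z = 0`. But the center of the nonzero
nilpotent Lie algebra `n` is nonzero.
-/

/-- The exponential of a linear endomorphism of a finite-dimensional real vector
space, computed via the matrix exponential in any basis. -/
noncomputable def expEnd {V : Type*} [AddCommGroup V] [Module ℝ V] [FiniteDimensional ℝ V]
    (f : Module.End ℝ V) : Module.End ℝ V :=
  Matrix.toLin (Module.finBasis ℝ V) (Module.finBasis ℝ V)
    (NormedSpace.exp (LinearMap.toMatrix (Module.finBasis ℝ V) (Module.finBasis ℝ V) f))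

/-- `Int(g)`: the subgroup of `GL(g)` generated by the exponentials `exp (ad x)`, `x ∈ g`. -/
noncomputable def intGroup (g : Type*) [LieRing g] [LieAlgebra ℝ g] [FiniteDimensional ℝ g] :
    Subgroup (g ≃ₗ[ℝ] g) :=
  Subgroup.closure {γ : g ≃ₗ[ℝ] g | ∃ x : g, γ.toLinearMap = expEnd (LieAlgebra.ad ℝ g x)}

/-- The coadjoint orbit `Int(g)·ξ ⊆ g*`, where `γ·ξ := ξ ∘ γ⁻¹`. -/
noncomputable def coadOrbit {g : Type*} [LieRing g] [LieAlgebra ℝ g] [FiniteDimensional ℝ g]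
    (ξ : Module.Dual ℝ g) : Set (Module.Dual ℝ g) :=
  {η | ∃ γ ∈ intGroup g, η = ξ ∘ₗ (γ⁻¹ : g ≃ₗ[ℝ] g).toLinearMap}

open Pointwise

def Submodule.stabilizerSubalgebra {R M : Type*} [CommSemiring R] [AddCommMonoid M] [Module R M]
    (p : Submodule R M) : Subalgebra R (Module.End R M) where
  carrier := {f | ∀ v ∈ p, f v ∈ p}
  mul_mem' hf hg v hv := hf _ (hg v hv)
  add_mem' hf hg v hv := p.add_mem (hf v hv) (hg v hv)
  algebraMap_mem' r _ hv := p.smul_mem r hv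

/-- The matrices of endomorphisms stabilizing `p` form a finite-dimensional, hence closed,
subalgebra, and a closed subalgebra is closed under the exponential series. -/
lemma expEnd_mem_stabilizerSubalgebra {V : Type*} [AddCommGroup V] [Module ℝ V]
    [FiniteDimensional ℝ V] {p : Submodule ℝ V} {f : Module.End ℝ V}
    (hf : f ∈ p.stabilizerSubalgebra) : expEnd f ∈ p.stabilizerSubalgebra := by
  let b := Module.finBasis ℝ V
  let S := p.stabilizerSubalgebra.comap (Matrix.toLinAlgEquiv b).toAlgHom
  have hS : IsClosed (S : Set (Matrix (Fin (Module.finrank ℝ V)) (Fin (Module.finrank ℝ V)) ℝ)) :=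
    (Subalgebra.toSubmodule S).closed_of_finiteDimensional
  have hfS : LinearMap.toMatrix b b f ∈ S := by
    change Matrix.toLin b b (LinearMap.toMatrix b b f) ∈ p.stabilizerSubalgebra
    rwa [Matrix.toLin_toMatrix]
  exact NormedSpace.exp_mem (R := ℝ) hS hfS

lemma Submodule.mem_stabilizer_of_smul_le {K V : Type*} [DivisionRing K] [AddCommGroup V]
    [Module K V] [FiniteDimensional K V] {p : Submodule K V} {e : V ≃ₗ[K] V} (he : e • p ≤ p) :
    e ∈ MulAction.stabilizer (V ≃ₗ[K] V) p :=
  Submodule.eq_of_le_of_finrank_eq he (e.finrank_map_eq p)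

lemma intGroup_le_stabilizer {g : Type*} [LieRing g] [LieAlgebra ℝ g] [FiniteDimensional ℝ g]
    {z : Submodule ℝ g} (hz : ∀ x : g, ∀ v ∈ z, ⁅x, v⁆ ∈ z) :
    intGroup g ≤ MulAction.stabilizer (g ≃ₗ[ℝ] g) z := by
  refine (Subgroup.closure_le _).2 ?_
  rintro γ ⟨x, hγ⟩
  refine Submodule.mem_stabilizer_of_smul_le ?_
  rintro _ ⟨v, hv, rfl⟩
  have hexp : expEnd (LieAlgebra.ad ℝ g x) ∈ z.stabilizerSubalgebra :=
    expEnd_mem_stabilizerSubalgebra (hz x)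
  simpa [← hγ] using hexp v hv

lemma coadOrbit_subset_dualAnnihilator {g : Type*} [LieRing g] [LieAlgebra ℝ g]
    [FiniteDimensional ℝ g] {z : Submodule ℝ g} (hz : ∀ x : g, ∀ v ∈ z, ⁅x, v⁆ ∈ z)
    {ξ : Module.Dual ℝ g} (hξ : ξ ∈ z.dualAnnihilator) :
    coadOrbit ξ ⊆ z.dualAnnihilator := by
  rintro _ ⟨γ, hγ, rfl⟩
  have hγz : γ⁻¹ • z = z := inv_mem (intGroup_le_stabilizer hz hγ)
  rw [SetLike.mem_coe, Submodule.mem_dualAnnihilator]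
  intro w hw
  exact (Submodule.mem_dualAnnihilator ξ).1 hξ _
    (hγz ▸ Submodule.smul_mem_pointwise_smul w γ⁻¹ z hw)

lemma Submodule.eq_top_of_isOpen_subset_closure {𝕜 E : Type*} [NontriviallyNormedField 𝕜]
    [CompleteSpace 𝕜] [AddCommGroup E] [Module 𝕜 E] [FiniteDimensional 𝕜 E] [TopologicalSpace E]
    [IsTopologicalAddGroup E] [ContinuousSMul 𝕜 E] [T2Space E] {p : Submodule 𝕜 E} {S O : Set E}
    (hO : IsOpen O) (hne : O.Nonempty) (hSp : S ⊆ p) (hOS : O ⊆ closure S) : p = ⊤ := by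
  have hOp : O ⊆ p := hOS.trans (closure_minimal hSp p.closed_of_finiteDimensional)
  obtain ⟨η, hη⟩ := hne
  exact p.eq_top_of_nonempty_interior' ⟨η, interior_maximal hOp hO hη⟩

lemma LieIdeal.exists_ne_zero_forall_lie_eq_zero {R L : Type*} [CommRing R] [LieRing L]
    [LieAlgebra R L] {n : LieIdeal R L} [LieRing.IsNilpotent n] (hn : n ≠ ⊥) :
    ∃ c ∈ n, c ≠ 0 ∧ ∀ y ∈ n, ⁅c, y⁆ = 0 := by
  have : Nontrivial n := (LieSubmodule.nontrivial_iff_ne_bot R L L).2 hn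
  have := LieModule.nontrivial_max_triv_of_isNilpotent R n n
  obtain ⟨⟨c, hc⟩, hc0⟩ := exists_ne (0 : LieModule.maxTrivSubmodule R n n)
  refine ⟨c, c.2, fun h => hc0 (by ext; simpa using h), fun y hy => ?_⟩
  have := (LieModule.mem_maxTrivSubmodule R n n c).1 hc ⟨y, hy⟩
  rw [← lie_skew, neg_eq_zero]
  exact congrArg Subtype.val this

lemma LieIdeal.lie_mem_of_mem_center {R L : Type*} [CommRing R] [LieRing L] [LieAlgebra R L]
    {n : LieIdeal R L} {z : Submodule R L} (hz : ∀ x : L, x ∈ z ↔ x ∈ n ∧ ∀ y ∈ n, ⁅x, y⁆ = 0)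
    (x : L) {v : L} (hv : v ∈ z) : ⁅x, v⁆ ∈ z := by
  obtain ⟨hvn, hvc⟩ := (hz v).1 hv
  refine (hz _).2 ⟨n.lie_mem hvn, fun y hy => ?_⟩
  rw [lie_lie, hvc y hy, hvc _ (n.lie_mem hy), lie_zero, sub_zero]

theorem statement9_general {g : Type*} [LieRing g] [LieAlgebra ℝ g] [FiniteDimensional ℝ g]
    [TopologicalSpace (Module.Dual ℝ g)] [IsTopologicalAddGroup (Module.Dual ℝ g)]
    [ContinuousSMul ℝ (Module.Dual ℝ g)] [T2Space (Module.Dual ℝ g)]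
    (n : LieIdeal ℝ g) (hn : n ≠ ⊥) (hnilp : LieRing.IsNilpotent ↥n)
    (z : Submodule ℝ g) (hz : ∀ x : g, x ∈ z ↔ x ∈ n ∧ ∀ y ∈ n, ⁅x, y⁆ = 0)
    (O : Set (Module.Dual ℝ g)) (hne : O.Nonempty) (hO : IsOpen O)
    (horb : ∀ ξ ∈ O, O ⊆ closure (coadOrbit ξ)) :
    O ∩ ↑(Submodule.dualAnnihilator z) = ∅ := by
  have hzad : ∀ x : g, ∀ v ∈ z, ⁅x, v⁆ ∈ z := LieIdeal.lie_mem_of_mem_center hz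
  obtain ⟨c, hcn, hc0, hcc⟩ := LieIdeal.exists_ne_zero_forall_lie_eq_zero hn
  have hz_ne : z ≠ ⊥ := fun h => hc0 (by simpa [h] using (hz c).2 ⟨hcn, hcc⟩)
  refine Set.eq_empty_of_forall_notMem fun ξ ⟨hξO, hξ⟩ => hz_ne ?_
  rw [← Submodule.dualAnnihilator_eq_top_iff]
  exact Submodule.eq_top_of_isOpen_subset_closure hO hne
    (coadOrbit_subset_dualAnnihilator hzad hξ) (horb ξ hξO)

/-- Let `n ⊆ g` be a nonzero nilpotent ideal with `dim (g/n) = 1` and `z` the center of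
`n`.  If `O ⊆ g*` is a nonempty open subset contained in the closure of the coadjoint
orbit `Int(g)·ξ` of each of its points `ξ`, then `O ∩ z^⊥ = ∅`, i.e. every `ξ ∈ O`
restricts to a nonzero functional on `z`.  (The dual `g*` carries its standard topology:
any Hausdorff vector topology, which is unique since `g*` is finite-dimensional.) -/
theorem statement9 {g : Type*} [LieRing g] [LieAlgebra ℝ g] [FiniteDimensional ℝ g]
    [TopologicalSpace (Module.Dual ℝ g)] [IsTopologicalAddGroup (Module.Dual ℝ g)]
    [ContinuousSMul ℝ (Module.Dual ℝ g)] [T2Space (Module.Dual ℝ g)]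
    (n : LieIdeal ℝ g) (hn : n ≠ ⊥) (hnilp : LieRing.IsNilpotent ↥n)
    (hcodim : Module.finrank ℝ (g ⧸ n.toSubmodule) = 1)
    (z : Submodule ℝ g) (hz : ∀ x : g, x ∈ z ↔ x ∈ n ∧ ∀ y ∈ n, ⁅x, y⁆ = 0)
    (O : Set (Module.Dual ℝ g)) (hne : O.Nonempty) (hO : IsOpen O)
    (horb : ∀ ξ ∈ O, O ⊆ closure (coadOrbit ξ)) :
    O ∩ ↑(Submodule.dualAnnihilator z) = ∅ :=
  statement9_general n hn hnilp z hz O hne hO horb
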